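/- Let γ₁, γ₂, σ₁ > 0 and consider the transfer function G(s) = σ₁(s + γ₁)/(s(s + γ₁ + γ₂)). For every real ω ≠ 0, the real part of G(iω) is nonnegative; explicitly Re G(iω) = σ₁γ₂ /((γ₁+γ₂)² + ω²) ≥ 0. -/

import Mathlib

open Complex

/-- Multiplying by the conjugate of the denominator `iω(iω + γ₁ + γ₂)`, whose squared modulus is
`ω² ((γ₁ + γ₂)² + ω²)`, leaves the real part `σ₁ γ₂ ω² / (ω² ((γ₁ + γ₂)² + ω²))`. -/
theorem re_transfer_function_imaginary_axis (γ₁ γ₂ σ₁ ω : ℝ) (hω : ω ≠ 0) :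
    ((σ₁ : ℂ) * (I * ω + γ₁) / (I * ω * (I * ω + γ₁ + γ₂))).re
      = σ₁ * γ₂ / ((γ₁ + γ₂) ^ 2 + ω ^ 2) := by
  have hden : (γ₁ + γ₂) ^ 2 + ω ^ 2 ≠ 0 := by positivity
  rw [div_re]
  simp only [mul_re, ofReal_re, add_re, I_re, zero_mul, I_im, ofReal_im, mul_zero, sub_self,
    zero_add, add_im, mul_im, one_mul, add_zero, sub_zero, zero_sub, mul_neg, normSq_apply,
    neg_mul, neg_neg]
  field_simp
  ring

theorem stmt_14_general (γ₁ γ₂ σ₁ : ℝ) (hγ₂ : 0 < γ₂) (hσ₁ : 0 < σ₁)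
    (ω : ℝ) (hω : ω ≠ 0) :
    let G : ℂ → ℂ := fun s => σ₁ * (s + γ₁) / (s * (s + γ₁ + γ₂))
    (G (Complex.I * ω)).re = σ₁ * γ₂ / ((γ₁ + γ₂)^2 + ω^2) ∧
      0 ≤ (G (Complex.I * ω)).re := by
  intro G
  have hre : (G (I * ω)).re = σ₁ * γ₂ / ((γ₁ + γ₂) ^ 2 + ω ^ 2) :=
    re_transfer_function_imaginary_axis γ₁ γ₂ σ₁ ω hω
  exact ⟨hre, hre ▸ by positivity⟩

theorem stmt_14 (γ₁ γ₂ σ₁ : ℝ) (hγ₁ : 0 < γ₁) (hγ₂ : 0 < γ₂) (hσ₁ : 0 < σ₁)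
    (ω : ℝ) (hω : ω ≠ 0) :
    let G : ℂ → ℂ := fun s => σ₁ * (s + γ₁) / (s * (s + γ₁ + γ₂))
    (G (Complex.I * ω)).re = σ₁ * γ₂ / ((γ₁ + γ₂)^2 + ω^2) ∧
      0 ≤ (G (Complex.I * ω)).re :=
  stmt_14_general γ₁ γ₂ σ₁ hγ₂ hσ₁ ω hω
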